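/- arXiv:2407.02375 — 4 statements merged into one kernel-verified Lean document; each statement's English description precedes it below -/
import Mathlib

section
/- For every polynomial f in Poly and every i ≥ 1 one has x_i·R_i(∂_i f) = R_{i+1}f − R_i f, and consequently the (finitely supported) sum Σ_{i≥1} x_i·R_i(∂_i f) equals f − R_1 f. -/
/-
Conventions: `Pol = MvPolynomial ℕ ℤ` with the Lean variable `X i` representing
the paper's variable `x_{i+1}` (0-indexed).  All operators carrying a paper index
`i ≥ 1` are represented by Lean operators indexed by `i : ℕ` (Lean `i` ↔ paper `i+1`),
and sequences of positive integers are represented by sequences of natural numbers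
(entry `v` ↔ paper entry `v+1`).
-/

open MvPolynomial
open scoped Classical

abbrev Pol := MvPolynomial ℕ ℤ

noncomputable section

/-- Interchange the variables `x_{i+1}` and `x_{i+2}` (paper indexing). -/
def swapVar (i : ℕ) (f : Pol) : Pol := rename (Equiv.swap i (i+1)) f

/-- Exact division: the unique `g` with `d * g = f` when it exists (`0` otherwise). -/
def exactDiv (d f : Pol) : Pol := if h : ∃ g : Pol, d * g = f then h.choose else 0

/-- The divided difference operator `∂_{i+1}` (paper indexing). -/
def ddiff (i : ℕ) (f : Pol) : Pol := exactDiv (X i - X (i+1)) (f - swapVar i f)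

/-- The Bergeron–Sottile operator `R_{i+1}` (paper indexing): `x_j ↦ x_j` for
`j < i+1`, `x_{i+1} ↦ 0`, `x_j ↦ x_{j-1}` for `j > i+1`. -/
def BS (i : ℕ) : Pol →ₐ[ℤ] Pol :=
  aeval fun j => if j < i then X j else if j = i then 0 else X (j-1)

/-- `m`-fold iterate of `BS i`. -/
def BSit (i m : ℕ) (f : Pol) : Pol := (fun g => BS i g)^[m] f

/-- `Z g = Σ_{k ≥ 0} R₁ᵏ g`. -/
def Zop (f : Pol) : Pol := ∑ᶠ k : ℕ, BSit 0 k f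

/-- `Z^{(m)} g = Σ_{k ≥ 0} R₁^{km} g`. -/
def Zm (m : ℕ) (f : Pol) : Pol := ∑ᶠ k : ℕ, BSit 0 (k * m) f

/-- The truncation operator keeping the first `n` variables: `Π_n` in paper indexing. -/
def truncOp (n : ℕ) : Pol →ₐ[ℤ] Pol := aeval fun j => if j < n then X j else 0

/-- The quasisymmetric divided difference `T_{i+1}` defined as the exact quotient
`((R_{i+2} - R_{i+1})f)/x_{i+1}` (paper indexing). -/
def TqDiv (i : ℕ) (f : Pol) : Pol := exactDiv (X i) (BS (i+1) f - BS i f)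

/-- The quasisymmetric divided difference `T_{i+1} = R_{i+1} ∘ ∂_{i+1}` (paper indexing). -/
def Tq (i : ℕ) (f : Pol) : Pol := BS i (ddiff i f)

/-- The `m`-quasisymmetric divided difference `T^{(m)}_{i+1}` (paper indexing). -/
def Tm (m i : ℕ) (f : Pol) : Pol := exactDiv (X i) (BSit (i+1) m f - BSit i m f)

/-- The slide extractor `D_{i+1} = Π_{i+1} ∘ ∂_{i+1}` (paper indexing). -/
def Dop (i : ℕ) (f : Pol) : Pol := truncOp (i+1) (ddiff i f)

/-- The `m`-slide extractor `D^{(m)}_{i+1} = Π_{i+1} ∘ T^{(m)}_{i+1}` (paper indexing). -/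
def Dm (m i : ℕ) (f : Pol) : Pol := truncOp (i+1) (Tm m i f)

/-- The slide creator `B_{i+1} f = Σ_{k=1}^{i+1} x_k · R_k^{i+1-k}(Π_{i+1} f)` (paper indexing). -/
def Bop (i : ℕ) (f : Pol) : Pol :=
  ∑ k ∈ Finset.range (i+1), X k * BSit k (i - k) (truncOp (i+1) f)

/-- The creation operator `Z ∘ x_{i+1} ∘ R_{i+1}` (paper indexing). -/
def crea (i : ℕ) (f : Pol) : Pol := Zop (X i * BS i f)

/-- A permutation of `{0,1,2,…}` is finitely supported if it fixes all but
finitely many points. -/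
def FinSupp (w : Equiv.Perm ℕ) : Prop := Set.Finite {x | w x ≠ x}

/-- Coxeter length: the minimal `k` such that `w` is a product of `k` simple
transpositions. -/
def len (w : Equiv.Perm ℕ) : ℕ :=
  sInf {k | ∃ l : List ℕ, l.length = k ∧ (l.map fun i => Equiv.swap i (i+1)).prod = w}

/-- The set of reduced words for `w`. -/
def Red (w : Equiv.Perm ℕ) : Set (List ℕ) :=
  {l | l.length = len w ∧ (l.map fun i => Equiv.swap i (i+1)).prod = w}

/-- A family of polynomials indexed by permutations is a family of Schubert
polynomials if: each member is homogeneous of degree the length, the identity is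
sent to `1`, and divided differences act as expected (all this for finitely
supported permutations). -/
def IsSchubertFamily (S : Equiv.Perm ℕ → Pol) : Prop :=
  (∀ w, FinSupp w → (S w).IsHomogeneous (len w)) ∧
  S 1 = 1 ∧
  ∀ w, FinSupp w → ∀ i : ℕ,
    ddiff i (S w) = if w (i+1) < w i then S (w * Equiv.swap i (i+1)) else 0

/-- `b` is a compatible sequence for `a`. -/
def Compat {k : ℕ} (a b : Fin k → ℕ) : Prop :=
  Monotone b ∧ (∀ j, b j ≤ a j) ∧
  ∀ (j : ℕ) (h : j + 1 < k),
    a ⟨j, Nat.lt_of_succ_lt h⟩ < a ⟨j+1, h⟩ → b ⟨j, Nat.lt_of_succ_lt h⟩ < b ⟨j+1, h⟩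

/-- The slide polynomial `𝔉_a`, as the sum of the monomials of all compatible
sequences for `a`. -/
def slide {k : ℕ} (a : Fin k → ℕ) : Pol :=
  ∑ᶠ b ∈ {b : Fin k → ℕ | Compat a b}, ∏ j, X (b j)

/-- `b` is an `m`-compatible sequence for `a` (entrywise congruent mod `m`). -/
def MCompat (m : ℕ) {k : ℕ} (a b : Fin k → ℕ) : Prop :=
  Monotone b ∧ (∀ j, b j ≤ a j ∧ b j % m = a j % m) ∧
  ∀ (j : ℕ) (h : j + 1 < k),
    a ⟨j, Nat.lt_of_succ_lt h⟩ < a ⟨j+1, h⟩ → b ⟨j, Nat.lt_of_succ_lt h⟩ < b ⟨j+1, h⟩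

/-- The `m`-slide polynomial `𝔉ᵐ_a`. -/
def mslide (m : ℕ) {k : ℕ} (a : Fin k → ℕ) : Pol :=
  ∑ᶠ b ∈ {b : Fin k → ℕ | MCompat m a b}, ∏ j, X (b j)

/-- Value of the `m`-slide creator `B^{(m)}_{a+1}` (paper indexing) on the monomial with
exponent vector `d`. -/
def BmMono (m a : ℕ) (d : ℕ →₀ ℕ) : Pol :=
  if ∃ t, a < t ∧ d t ≠ 0 then 0
  else monomial (d.erase a) 1 *
    ∑ r ∈ Finset.range (a+1),
      if r * m ≤ a ∧ ∀ t, t < a → d t ≠ 0 → t < a - r * m then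
        X (a - r * m) ^ (d a + 1) else 0

/-- The `m`-slide creator `B^{(m)}_{a+1}` (paper indexing), extended linearly from
its values on monomials. -/
def Bm (m a : ℕ) (f : Pol) : Pol := ∑ d ∈ f.support, C (f.coeff d) * BmMono m a d

end

/-!
Applying the ring homomorphism `R_i` to `(x_i - x_{i+1}) ∂_i f = f - s_i f` and using
`R_i ∘ s_i = R_{i+1}` gives `x_i R_i(∂_i f) = R_{i+1} f - R_i f`, because `R_i` kills `x_i` and
sends `x_{i+1}` to `x_i`. Once `i` exceeds the index of every variable of `f`, `R_i` fixes `f`,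
so the sum is finite and telescopes to `f - R_1 f`.
-/

lemma X_sub_X_dvd_sub_swapVar (i : ℕ) (f : Pol) :
    (X i - X (i+1) : Pol) ∣ f - swapVar i f := by
  rw [← Ideal.mem_span_singleton, ← Ideal.Quotient.eq]
  -- modulo `x_i - x_{i+1}` the swap of the two variables acts trivially
  have hswap : ((Ideal.Quotient.mkₐ ℤ _).comp (rename (Equiv.swap i (i+1))) : Pol →ₐ[ℤ] _) =
      Ideal.Quotient.mkₐ ℤ (Ideal.span {(X i - X (i+1) : Pol)}) := by
    refine MvPolynomial.algHom_ext fun j => ?_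
    have hX : Ideal.Quotient.mk (Ideal.span {(X i - X (i+1) : Pol)}) (X i) =
        Ideal.Quotient.mk _ (X (i+1)) := Ideal.Quotient.eq.mpr (Ideal.mem_span_singleton_self _)
    simp only [AlgHom.comp_apply, rename_X, Ideal.Quotient.mkₐ_eq_mk, Equiv.swap_apply_def]
    split_ifs with h1 h2
    · rw [h1, hX]
    · rw [h2, hX]
    · rfl
  exact (DFunLike.congr_fun hswap f).symm

lemma X_sub_X_mul_ddiff (i : ℕ) (f : Pol) :
    (X i - X (i+1) : Pol) * ddiff i f = f - swapVar i f := by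
  have h : ∃ g : Pol, (X i - X (i+1)) * g = f - swapVar i f :=
    (X_sub_X_dvd_sub_swapVar i f).imp fun _ hg => hg.symm
  rw [ddiff, exactDiv, dif_pos h]
  exact h.choose_spec

lemma BS_X (i j : ℕ) :
    BS i (X j) = if j < i then X j else if j = i then 0 else X (j-1) := aeval_X _ _

lemma BS_swapVar (i : ℕ) (f : Pol) : BS i (swapVar i f) = BS (i+1) f := by
  show ((BS i).comp (rename (Equiv.swap i (i+1)))) f = BS (i+1) f
  congr 1
  refine MvPolynomial.algHom_ext fun j => ?_
  simp only [AlgHom.comp_apply, rename_X, BS_X, Equiv.swap_apply_def]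
  split_ifs <;> first | rfl | omega | (congr 1; omega)

lemma BS_of_forall_vars_lt {i : ℕ} {f : Pol} (h : ∀ j ∈ f.vars, j < i) : BS i f = f := by
  conv_rhs => rw [← aeval_X_left_apply f]
  exact eval₂Hom_congr' rfl (fun j hj _ => by simp [h j hj]) rfl

lemma exists_forall_ge_BS_eq_self (f : Pol) : ∃ N, ∀ i ≥ N, BS i f = f := by
  obtain ⟨N, hN⟩ := Finset.exists_nat_subset_range f.vars
  exact ⟨N, fun i hi =>
    BS_of_forall_vars_lt fun j hj => (Finset.mem_range.mp (hN hj)).trans_le hi⟩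

lemma X_mul_BS_ddiff (f : Pol) (i : ℕ) : X i * BS i (ddiff i f) = BS (i+1) f - BS i f := by
  have h := congrArg (BS i) (X_sub_X_mul_ddiff i f)
  simp only [map_mul, map_sub, BS_X, BS_swapVar, lt_irrefl, if_true, if_false,
    if_neg (by omega : ¬ i + 1 < i), if_neg (by omega : ¬ i + 1 = i), Nat.add_sub_cancel] at h
  linear_combination -h

/-- for every `f` and `i ≥ 1`, `x_i·R_i(∂_i f) = R_{i+1}f − R_i f`, and
consequently the (finitely supported) sum `Σ_{i≥1} x_i·R_i(∂_i f)` equals `f − R₁ f`. -/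
theorem stmt_0 (f : Pol) :
    (∀ i : ℕ, X i * BS i (ddiff i f) = BS (i+1) f - BS i f) ∧
    {i : ℕ | X i * BS i (ddiff i f) ≠ 0}.Finite ∧
    ∑ᶠ i : ℕ, X i * BS i (ddiff i f) = f - BS 0 f := by
  obtain ⟨N, hN⟩ := exists_forall_ge_BS_eq_self f
  have hsupp : {i : ℕ | X i * BS i (ddiff i f) ≠ 0} ⊆ Finset.range N := fun i hi => by
    by_contra hiN
    refine hi ?_
    rw [X_mul_BS_ddiff, hN i (by simpa using hiN), hN (i+1) (by simp at hiN; omega), sub_self]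
  refine ⟨X_mul_BS_ddiff f, (Finset.range N).finite_toSet.subset hsupp, ?_⟩
  rw [finsum_eq_sum_of_support_subset _ hsupp]
  calc ∑ i ∈ Finset.range N, X i * BS i (ddiff i f)
      = ∑ i ∈ Finset.range N, (BS (i+1) f - BS i f) :=
        Finset.sum_congr rfl fun i _ => X_mul_BS_ddiff f i
    _ = f - BS 0 f := by rw [Finset.sum_range_sub (fun i => BS i f), hN N le_rfl]
end

section
/- There exists a unique family of polynomials (𝔖_w), indexed by the finitely supported permutations w of {1,2,…}, such that each 𝔖_w is homogeneous of degree ℓ(w), 𝔖_{id} = 1, and for all i ≥ 1: ∂_i 𝔖_w = 𝔖_{w s_i} if i ∈ Des(w), and ∂_i 𝔖_w = 0 otherwise. (These are the Schubert polynomials.) -/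
/-
Conventions: `Pol = MvPolynomial ℕ ℤ` with the Lean variable `X i` representing
the paper's variable `x_{i+1}` (0-indexed).  All operators carrying a paper index
`i ≥ 1` are represented by Lean operators indexed by `i : ℕ` (Lean `i` ↔ paper `i+1`),
and sequences of positive integers are represented by sequences of natural numbers
(entry `v` ↔ paper entry `v+1`).
-/

open MvPolynomial
open scoped Classical

/-!
Existence. For `w` fixing every point `≥ n`, set `𝔖_w = ∂_{w⁻¹w₀} x^δ`, where
`x^δ = x₀^{n-1} x₁^{n-2} ⋯ x_{n-2}`, `w₀` reverses `{0, …, n-1}` and `∂_u` composes the `∂ᵢ`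
along a reduced word of `u`.
This does not depend on the reduced word: by induction on the length, two reduced words
ending in different descents `i, j` can both be traded for reduced words ending in `j i, i j`
or `i j i, j i j`, and the `∂ᵢ` commute when far apart and satisfy the braid relation.
It does not depend on `n` because `∂_{n-1} ⋯ ∂₀` sends the `x^δ` of `S_{n+1}`
to that of `S_n`. As `ℓ(w⁻¹w₀) = ℓ(w₀) - ℓ(w)`, for a descent `i` of `w` the letter `i` followed
by a reduced word of `w⁻¹w₀` is a reduced word of `(wsᵢ)⁻¹w₀`, so `∂ᵢ𝔖_w = 𝔖_{wsᵢ}`; for an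
ascent `∂ᵢ𝔖_w = ∂ᵢ∂ᵢ(⋯) = 0`. Homogeneity comes from `deg x^δ = ℓ(w₀)`.

Uniqueness. By induction on `ℓ(w)`, the difference of two such families at `w` is homogeneous
of positive degree and killed by every `∂ᵢ`, hence invariant under every swap `xᵢ ↔ xᵢ₊₁`.
A variable occurring in it would force all later variables to occur, so it is constant, hence `0`.
-/

section

attribute [local instance] MvPolynomial.gradedAlgebra

lemma MvPolynomial.IsHomogeneous.of_mul_left {σ R : Type*} [CommSemiring R] [NoZeroDivisors R]
    {p g : MvPolynomial σ R} {a m : ℕ} (hp : p.IsHomogeneous a) (hp0 : p ≠ 0)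
    (h : (p * g).IsHomogeneous (a + m)) : g.IsHomogeneous m := by
  intro d hd
  have hcomp : homogeneousComponent (a + d.degree) (p * g) =
      p * homogeneousComponent d.degree g := by
    have hdec (x : MvPolynomial σ R) (n : ℕ) :
        (DirectSum.decompose (homogeneousSubmodule σ R) x n : MvPolynomial σ R) =
          homogeneousComponent n x :=
      decomposition.decompose'_apply x n
    have := DirectSum.coe_decompose_mul_of_left_mem_of_le (homogeneousSubmodule σ R)
      (b := g) (n := a + d.degree) hp (Nat.le_add_right a _)
    rwa [hdec, hdec, Nat.add_sub_cancel_left] at this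
  have hne : homogeneousComponent d.degree g ≠ 0 := fun h0 => hd <| by
    simpa [h0] using (coeff_homogeneousComponent (n := d.degree) (φ := g) d).symm
  rw [homogeneousComponent_of_mem h] at hcomp
  split_ifs at hcomp with hdeg
  · have hm : d.degree = m := Nat.add_left_cancel hdeg
    rwa [Finsupp.degree_eq_weight_one] at hm
  · exact absurd hcomp.symm (mul_ne_zero hp0 hne)
end

noncomputable section

namespace Schubert

open Equiv

abbrev sw (i : ℕ) : Perm ℕ := swap i (i + 1)

lemma sw_mul_sw_comm {i j : ℕ} (h : i + 1 < j ∨ j + 1 < i) : sw i * sw j = sw j * sw i := by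
  ext x
  simp only [Perm.mul_apply, swap_apply_def]
  split_ifs <;> omega

lemma sw_braid (i : ℕ) : sw i * sw (i + 1) * sw i = sw (i + 1) * sw i * sw (i + 1) := by
  ext x
  simp only [Perm.mul_apply, swap_apply_def]
  split_ifs <;> omega

section DividedDifference

lemma swapVar_X (i n : ℕ) : swapVar i (X n) = X (sw i n) := rename_X _ _

lemma swapVar_sub (i : ℕ) (f g : Pol) : swapVar i (f - g) = swapVar i f - swapVar i g :=
  map_sub _ f g

lemma swapVar_mul (i : ℕ) (f g : Pol) : swapVar i (f * g) = swapVar i f * swapVar i g :=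
  map_mul _ f g

lemma swapVar_swapVar (i : ℕ) (f : Pol) : swapVar i (swapVar i f) = f := by
  simp only [swapVar, rename_rename, ← Perm.coe_mul, swap_mul_self, Perm.coe_one, rename_id,
    AlgHom.id_apply]

lemma swapVar_comm {i j : ℕ} (h : i + 1 < j ∨ j + 1 < i) (f : Pol) :
    swapVar i (swapVar j f) = swapVar j (swapVar i f) := by
  simp only [swapVar, rename_rename, ← Perm.coe_mul, sw_mul_sw_comm h]

lemma swapVar_braid (i : ℕ) (f : Pol) :
    swapVar i (swapVar (i + 1) (swapVar i f)) =
      swapVar (i + 1) (swapVar i (swapVar (i + 1) f)) := by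
  simp only [swapVar, rename_rename, ← Perm.coe_mul, ← mul_assoc, sw_braid]

lemma X_sub_X_ne_zero {i j : ℕ} (h : i ≠ j) : (X i - X j : Pol) ≠ 0 :=
  sub_ne_zero.mpr fun hij => h (X_injective hij)

/-- Modulo `X i - X (i+1)` the swap of these two variables is the identity. -/
lemma X_sub_X_dvd_sub_swapVar (i : ℕ) (f : Pol) : X i - X (i + 1) ∣ f - swapVar i f := by
  let π := Ideal.Quotient.mkₐ ℤ (Ideal.span {(X i - X (i + 1) : Pol)})
  have hπ : π.comp (rename (sw i)) = π := by
    refine algHom_ext fun n => ?_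
    have hi : π (X i) = π (X (i + 1)) :=
      Ideal.Quotient.eq.mpr (Ideal.subset_span rfl)
    simp only [AlgHom.comp_apply, rename_X, swap_apply_def]
    split_ifs <;> simp_all
  rw [← Ideal.mem_span_singleton, ← Ideal.Quotient.eq]
  exact (AlgHom.congr_fun hπ f).symm

lemma X_sub_X_mul_ddiff (i : ℕ) (f : Pol) :
    (X i - X (i + 1)) * ddiff i f = f - swapVar i f := by
  obtain ⟨g, hg⟩ := X_sub_X_dvd_sub_swapVar i f
  have hex : ∃ g, (X i - X (i + 1)) * g = f - swapVar i f := ⟨g, hg.symm⟩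
  rw [ddiff, exactDiv, dif_pos hex]
  exact hex.choose_spec

lemma ddiff_eq_of_mul_eq {i : ℕ} {f g : Pol} (h : (X i - X (i + 1)) * g = f - swapVar i f) :
    ddiff i f = g :=
  mul_left_cancel₀ (X_sub_X_ne_zero (by omega)) ((X_sub_X_mul_ddiff i f).trans h.symm)

lemma ddiff_sub (i : ℕ) (f g : Pol) : ddiff i (f - g) = ddiff i f - ddiff i g := by
  apply ddiff_eq_of_mul_eq
  rw [mul_sub, X_sub_X_mul_ddiff, X_sub_X_mul_ddiff, swapVar_sub]
  ring

lemma ddiff_eq_zero_iff {i : ℕ} {f : Pol} : ddiff i f = 0 ↔ swapVar i f = f := by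
  rw [← mul_right_inj' (X_sub_X_ne_zero (show i ≠ i + 1 by omega)), X_sub_X_mul_ddiff,
    mul_zero, sub_eq_zero, eq_comm]

lemma swapVar_ddiff (i : ℕ) (f : Pol) : swapVar i (ddiff i f) = ddiff i f := by
  refine mul_left_cancel₀ (X_sub_X_ne_zero (show i + 1 ≠ i by omega)) ?_
  have h := congrArg (swapVar i) (X_sub_X_mul_ddiff i f)
  simp only [swapVar_mul, swapVar_sub, swapVar_X, swap_apply_left, swap_apply_right,
    swapVar_swapVar] at h
  linear_combination h + X_sub_X_mul_ddiff i f

lemma ddiff_ddiff (i : ℕ) (f : Pol) : ddiff i (ddiff i f) = 0 :=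
  ddiff_eq_zero_iff.mpr (swapVar_ddiff i f)

lemma ddiff_mul_of_swapVar_eq {i : ℕ} {g : Pol} (hg : swapVar i g = g) (f : Pol) :
    ddiff i (g * f) = g * ddiff i f := by
  apply ddiff_eq_of_mul_eq
  rw [swapVar_mul, hg, mul_left_comm, X_sub_X_mul_ddiff]
  ring

lemma swapVar_ddiff_of_far {i j : ℕ} (h : i + 1 < j ∨ j + 1 < i) (f : Pol) :
    swapVar j (ddiff i f) = ddiff i (swapVar j f) := by
  refine (ddiff_eq_of_mul_eq ?_).symm
  have hs := congrArg (swapVar j) (X_sub_X_mul_ddiff i f)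
  rwa [swapVar_mul, swapVar_sub, swapVar_sub, swapVar_X, swapVar_X,
    swap_apply_of_ne_of_ne (by omega) (by omega), swap_apply_of_ne_of_ne (by omega) (by omega),
    ← swapVar_comm h] at hs

lemma ddiff_X_mul_of_swapVar_eq {i : ℕ} {g : Pol} (hg : swapVar i g = g) :
    ddiff i (X i * g) = g := by
  have hX : ddiff i (X i) = 1 :=
    ddiff_eq_of_mul_eq (by rw [swapVar_X, swap_apply_left, mul_one])
  rw [mul_comm, ddiff_mul_of_swapVar_eq hg, hX, mul_one]

lemma ddiff_comm {i j : ℕ} (h : i + 2 ≤ j) (f : Pol) :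
    ddiff i (ddiff j f) = ddiff j (ddiff i f) := by
  refine mul_left_cancel₀ (X_sub_X_ne_zero (show j ≠ j + 1 by omega))
    (mul_left_cancel₀ (X_sub_X_ne_zero (show i ≠ i + 1 by omega)) ?_)
  have hi := X_sub_X_mul_ddiff i f
  have hj := X_sub_X_mul_ddiff j f
  have hij := X_sub_X_mul_ddiff i (ddiff j f)
  have hji := X_sub_X_mul_ddiff j (ddiff i f)
  have hi' := X_sub_X_mul_ddiff i (swapVar j f)
  have hj' := X_sub_X_mul_ddiff j (swapVar i f)
  have ci := swapVar_ddiff_of_far (i := j) (j := i) (by omega) f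
  have cj := swapVar_ddiff_of_far (i := i) (j := j) (by omega) f
  have cij := swapVar_comm (i := i) (j := j) (by omega) f
  linear_combination (X j - X (j + 1)) * (hij - ci) + hj - hj'
    - (X i - X (i + 1)) * (hji - cj) - hi + hi' - cij

/-- The right side is the antisymmetrization of `f` over the permutations of `xᵢ, xᵢ₊₁, xᵢ₊₂`. -/
lemma vandermonde_mul_ddiff_ddiff_ddiff (i : ℕ) (f : Pol) :
    (X i - X (i + 1)) * (X (i + 1) - X (i + 2)) * (X i - X (i + 2)) *
        ddiff i (ddiff (i + 1) (ddiff i f)) =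
      f - swapVar i f - swapVar (i + 1) f + swapVar (i + 1) (swapVar i f)
        + swapVar i (swapVar (i + 1) f) - swapVar i (swapVar (i + 1) (swapVar i f)) := by
  have h3 := X_sub_X_mul_ddiff i (ddiff (i + 1) (ddiff i f))
  have h2 := X_sub_X_mul_ddiff (i + 1) (ddiff i f)
  have h1 := X_sub_X_mul_ddiff i f
  have h2s := congrArg (swapVar i) h2
  have h1t := congrArg (swapVar (i + 1)) h1
  have h1st := congrArg (swapVar i) h1t
  simp (disch := omega) only [swapVar_mul, swapVar_sub, swapVar_X, swapVar_ddiff,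
    swap_apply_left, swap_apply_right, swap_apply_of_ne_of_ne] at h2s h1t h1st
  linear_combination (X (i + 1) - X (i + 2)) * (X i - X (i + 2)) * h3
    + (X i - X (i + 2)) * h2 - (X (i + 1) - X (i + 2)) * h2s + h1 - h1t + h1st

lemma vandermonde_mul_ddiff_ddiff_ddiff' (i : ℕ) (f : Pol) :
    (X i - X (i + 1)) * (X (i + 1) - X (i + 2)) * (X i - X (i + 2)) *
        ddiff (i + 1) (ddiff i (ddiff (i + 1) f)) =
      f - swapVar (i + 1) f - swapVar i f + swapVar i (swapVar (i + 1) f)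
        + swapVar (i + 1) (swapVar i f) - swapVar (i + 1) (swapVar i (swapVar (i + 1) f)) := by
  have h3 := X_sub_X_mul_ddiff (i + 1) (ddiff i (ddiff (i + 1) f))
  have h2 := X_sub_X_mul_ddiff i (ddiff (i + 1) f)
  have h1 := X_sub_X_mul_ddiff (i + 1) f
  have h2s := congrArg (swapVar (i + 1)) h2
  have h1t := congrArg (swapVar i) h1
  have h1st := congrArg (swapVar (i + 1)) h1t
  simp (disch := omega) only [swapVar_mul, swapVar_sub, swapVar_X, swapVar_ddiff,
    swap_apply_left, swap_apply_right, swap_apply_of_ne_of_ne] at h2s h1t h1st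
  linear_combination (X i - X (i + 1)) * (X i - X (i + 2)) * h3
    + (X i - X (i + 2)) * h2 - (X i - X (i + 1)) * h2s + h1 - h1t + h1st

lemma ddiff_braid (i : ℕ) (f : Pol) :
    ddiff i (ddiff (i + 1) (ddiff i f)) = ddiff (i + 1) (ddiff i (ddiff (i + 1) f)) := by
  have hΔ : (X i - X (i + 1) : Pol) * (X (i + 1) - X (i + 2)) * (X i - X (i + 2)) ≠ 0 :=
    mul_ne_zero (mul_ne_zero (X_sub_X_ne_zero (by omega)) (X_sub_X_ne_zero (by omega)))
      (X_sub_X_ne_zero (by omega))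
  refine mul_left_cancel₀ hΔ ?_
  rw [vandermonde_mul_ddiff_ddiff_ddiff, vandermonde_mul_ddiff_ddiff_ddiff', swapVar_braid]
  ring

lemma isHomogeneous_ddiff {m : ℕ} {f : Pol} (hf : f.IsHomogeneous (m + 1)) (i : ℕ) :
    (ddiff i f).IsHomogeneous m := by
  refine ((isHomogeneous_X ℤ i).sub (isHomogeneous_X ℤ (i + 1))).of_mul_left
    (X_sub_X_ne_zero (by omega)) ?_
  rw [X_sub_X_mul_ddiff, add_comm]
  exact hf.sub hf.rename_isHomogeneous

end DividedDifference


section Permutation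

def SupportedBelow (w : Perm ℕ) (n : ℕ) : Prop := ∀ x, n ≤ x → w x = x

variable {u v w : Perm ℕ} {i n : ℕ}

lemma SupportedBelow.mono (h : SupportedBelow w n) {m : ℕ} (hnm : n ≤ m) :
    SupportedBelow w m :=
  fun x hx => h x (hnm.trans hx)

lemma SupportedBelow.mul (hu : SupportedBelow u n) (hv : SupportedBelow v n) :
    SupportedBelow (u * v) n := fun x hx => by
  rw [Perm.mul_apply, hv x hx, hu x hx]

lemma SupportedBelow.inv (h : SupportedBelow w n) : SupportedBelow w⁻¹ n :=
  fun x hx => by rw [Perm.inv_eq_iff_eq, h x hx]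

lemma supportedBelow_sw (h : i + 2 ≤ n) : SupportedBelow (sw i) n :=
  fun _ _ => swap_apply_of_ne_of_ne (by omega) (by omega)

lemma SupportedBelow.apply_lt (h : SupportedBelow w n) {x : ℕ} (hx : x < n) : w x < n := by
  by_contra! hge
  have := w.injective (h (w x) hge)
  omega

lemma finSupp_iff_exists_supportedBelow : FinSupp w ↔ ∃ n, SupportedBelow w n := by
  constructor
  · intro h
    obtain ⟨b, hb⟩ := h.bddAbove
    exact ⟨b + 1, fun x hx => by_contra fun hne => by have := hb hne; omega⟩
  · rintro ⟨n, hn⟩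
    exact (Set.finite_Iio n).subset fun x hx => by_contra fun hge => hx (hn x (by simpa using hge))

lemma SupportedBelow.finSupp (h : SupportedBelow w n) : FinSupp w :=
  finSupp_iff_exists_supportedBelow.mpr ⟨n, h⟩

lemma finSupp_one : FinSupp 1 := SupportedBelow.finSupp (n := 0) fun _ _ => rfl

lemma _root_.FinSupp.mul (hu : FinSupp u) (hv : FinSupp v) : FinSupp (u * v) := by
  obtain ⟨n, hn⟩ := finSupp_iff_exists_supportedBelow.mp hu
  obtain ⟨m, hm⟩ := finSupp_iff_exists_supportedBelow.mp hv
  exact ((hn.mono (le_max_left n m)).mul (hm.mono (le_max_right n m))).finSupp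

lemma _root_.FinSupp.inv (h : FinSupp w) : FinSupp w⁻¹ := by
  obtain ⟨n, hn⟩ := finSupp_iff_exists_supportedBelow.mp h
  exact hn.inv.finSupp

lemma finSupp_sw (i : ℕ) : FinSupp (sw i) := (supportedBelow_sw (le_refl (i + 2))).finSupp

lemma _root_.FinSupp.mul_sw (h : FinSupp w) (i : ℕ) : FinSupp (w * sw i) := h.mul (finSupp_sw i)

lemma eq_one_of_forall_apply_lt_apply_succ (h : ∀ i, w i < w (i + 1)) : w = 1 := by
  have hmono : StrictMono w := strictMono_nat_of_lt_succ h
  have := Subsingleton.elim (hmono.orderIsoOfSurjective w w.surjective) (OrderIso.refl ℕ)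
  ext x
  exact congrArg (· x) this

lemma exists_descent_of_ne_one (h : w ≠ 1) : ∃ i, w (i + 1) < w i := by
  by_contra! hno
  exact h (eq_one_of_forall_apply_lt_apply_succ fun i =>
    (hno i).lt_of_ne (w.injective.ne (by omega)))

end Permutation


section Inversions

open Finset

def pairsBelow (n : ℕ) : Finset (ℕ × ℕ) := (range n ×ˢ range n).filter fun p => p.1 < p.2

lemma card_pairsBelow (n : ℕ) : (pairsBelow n).card = ∑ j ∈ range n, j := by
  rw [pairsBelow, card_filter, sum_product_right]
  refine sum_congr rfl fun b hb => ?_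
  rw [← card_filter]
  convert card_range b using 2
  ext a
  simp only [mem_filter, mem_range] at hb ⊢
  omega

def inversions (w : Perm ℕ) : Set (ℕ × ℕ) := {p | p.1 < p.2 ∧ w p.2 < w p.1}

variable {w : Perm ℕ} {i n : ℕ} {l : List ℕ}

lemma SupportedBelow.inversions_subset (h : SupportedBelow w n) :
    inversions w ⊆ pairsBelow n := by
  rintro ⟨a, b⟩ ⟨hab, hw⟩
  dsimp only at hab hw
  have hb : b < n := by
    by_contra! hb
    rw [h b hb] at hw
    have := w.injective (h (w a) (by omega))
    omega
  simp only [pairsBelow, coe_filter, mem_product, mem_range, Set.mem_ofPred_eq]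
  omega

lemma _root_.FinSupp.inversions_finite (hw : FinSupp w) : (inversions w).Finite := by
  obtain ⟨n, hn⟩ := finSupp_iff_exists_supportedBelow.mp hw
  exact (pairsBelow n).finite_toSet.subset hn.inversions_subset

lemma inversions_one : inversions 1 = ∅ :=
  Set.eq_empty_of_forall_notMem fun p hp => by
    simp only [inversions, Set.mem_ofPred_eq, Perm.one_apply] at hp
    omega

lemma sw_lt_sw {a b : ℕ} (hab : a < b) (hne : ¬(a = i ∧ b = i + 1)) : sw i a < sw i b := by
  simp only [swap_apply_def]
  split_ifs <;> omega

lemma inversions_mul_sw (h : w i < w (i + 1)) :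
    inversions (w * sw i) = insert (i, i + 1) (Prod.map (sw i) (sw i) '' inversions w) := by
  ext ⟨a, b⟩
  simp only [inversions, Set.mem_insert_iff, Set.mem_image, Set.mem_ofPred_eq, Prod.exists,
    Prod.map, Prod.mk.injEq, Perm.mul_apply]
  constructor
  · rintro ⟨hab, hw⟩
    by_cases hi : a = i ∧ b = i + 1
    · exact Or.inl hi
    · exact Or.inr ⟨sw i a, sw i b, ⟨sw_lt_sw hab hi, by simpa using hw⟩, by simp, by simp⟩
  · rintro (⟨rfl, rfl⟩ | ⟨c, d, ⟨hcd, hw⟩, rfl, rfl⟩)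
    · simpa using h
    · refine ⟨sw_lt_sw hcd ?_, by simpa using hw⟩
      rintro ⟨rfl, rfl⟩
      omega

lemma ncard_inversions_mul_sw (hw : FinSupp w) (h : w i < w (i + 1)) :
    (inversions (w * sw i)).ncard = (inversions w).ncard + 1 := by
  have hinj : Function.Injective (Prod.map (sw i) (sw i)) :=
    (sw i).injective.prodMap (sw i).injective
  have hnot : (i, i + 1) ∉ Prod.map (sw i) (sw i) '' inversions w := by
    rintro ⟨⟨c, d⟩, ⟨hcd, -⟩, heq⟩
    simp only [Prod.map, Prod.mk.injEq, swap_apply_def] at heq hcd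
    split_ifs at heq <;> omega
  rw [inversions_mul_sw h, Set.ncard_insert_of_notMem hnot (hw.inversions_finite.image _),
    Set.ncard_image_of_injective _ hinj]

end Inversions


section Length

def wordProd (l : List ℕ) : Perm ℕ := (l.map sw).prod

variable {w : Perm ℕ} {i : ℕ} {l : List ℕ}

@[simp] lemma wordProd_nil : wordProd [] = 1 := rfl

@[simp] lemma wordProd_cons (i : ℕ) (l : List ℕ) : wordProd (i :: l) = sw i * wordProd l :=
  List.prod_cons

@[simp] lemma wordProd_append (l₁ l₂ : List ℕ) :
    wordProd (l₁ ++ l₂) = wordProd l₁ * wordProd l₂ := by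
  simp [wordProd]

lemma wordProd_concat (l : List ℕ) (i : ℕ) : wordProd (l ++ [i]) = wordProd l * sw i := by
  simp

lemma wordProd_reverse (l : List ℕ) : wordProd l.reverse = (wordProd l)⁻¹ := by
  induction l with
  | nil => simp
  | cons i t ih => simp [ih, mul_inv_rev]

lemma finSupp_wordProd (l : List ℕ) : FinSupp (wordProd l) := by
  induction l using List.reverseRecOn with
  | nil => exact finSupp_one
  | append_singleton t i ih => rw [wordProd_concat]; exact ih.mul_sw i

lemma apply_lt_or_gt_apply_succ (w : Perm ℕ) (i : ℕ) : w i < w (i + 1) ∨ w (i + 1) < w i :=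
  lt_or_gt_of_ne (w.injective.ne (by omega))

lemma mul_sw_mul_sw (w : Perm ℕ) (i : ℕ) : w * sw i * sw i = w := by
  rw [mul_assoc, swap_mul_self, mul_one]

lemma sw_mul_sw_mul (i : ℕ) (w : Perm ℕ) : sw i * (sw i * w) = w := by
  rw [← mul_assoc, swap_mul_self, one_mul]

lemma ncard_inversions_mul_sw_of_gt (hw : FinSupp w) (h : w (i + 1) < w i) :
    (inversions (w * sw i)).ncard + 1 = (inversions w).ncard := by
  have h' : (w * sw i) i < (w * sw i) (i + 1) := by simpa using h
  rw [← ncard_inversions_mul_sw (hw.mul_sw i) h', mul_sw_mul_sw]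

lemma inversions_eq_empty_iff : inversions w = ∅ ↔ w = 1 := by
  refine ⟨fun h => by_contra fun hne => ?_, fun h => h ▸ inversions_one⟩
  obtain ⟨i, hi⟩ := exists_descent_of_ne_one hne
  exact (Set.eq_empty_iff_forall_notMem.mp h) (i, i + 1) ⟨by simp, hi⟩

lemma ncard_inversions_wordProd_le (l : List ℕ) :
    (inversions (wordProd l)).ncard ≤ l.length := by
  induction l using List.reverseRecOn with
  | nil => simp [inversions_one]
  | append_singleton t i ih =>
    rw [wordProd_concat, List.length_append, List.length_singleton]
    rcases apply_lt_or_gt_apply_succ (wordProd t) i with h | h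
    · rw [ncard_inversions_mul_sw (finSupp_wordProd t) h]
      omega
    · have := ncard_inversions_mul_sw_of_gt (finSupp_wordProd t) h
      omega

lemma exists_wordProd_eq (hw : FinSupp w) :
    ∃ l, wordProd l = w ∧ l.length = (inversions w).ncard := by
  induction hk : (inversions w).ncard generalizing w with
  | zero =>
    rw [Set.ncard_eq_zero hw.inversions_finite, inversions_eq_empty_iff] at hk
    exact ⟨[], hk.symm, rfl⟩
  | succ k ih =>
    have hne : w ≠ 1 := by rintro rfl; simp [inversions_one] at hk
    obtain ⟨i, hi⟩ := exists_descent_of_ne_one hne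
    have := ncard_inversions_mul_sw_of_gt hw hi
    obtain ⟨l, hl, hlen⟩ := ih (hw.mul_sw i) (by omega)
    exact ⟨l ++ [i], by rw [wordProd_concat, hl, mul_sw_mul_sw], by simp [hlen]⟩

lemma len_le_length (h : wordProd l = w) : len w ≤ l.length :=
  Nat.sInf_le ⟨l, rfl, h⟩

lemma len_eq_ncard_inversions (hw : FinSupp w) : len w = (inversions w).ncard := by
  obtain ⟨l, hl, hlen⟩ := exists_wordProd_eq hw
  refine le_antisymm (hlen ▸ len_le_length hl) ?_
  obtain ⟨l', hl'len, hl'⟩ := Nat.sInf_mem (s := {k | ∃ l : List ℕ, l.length = k ∧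
    (l.map fun i => swap i (i + 1)).prod = w}) ⟨l.length, l, rfl, hl⟩
  calc (inversions w).ncard = (inversions (wordProd l')).ncard := by rw [wordProd, ← hl']
    _ ≤ l'.length := ncard_inversions_wordProd_le l'
    _ = len w := hl'len

lemma len_one : len 1 = 0 := by
  rw [len_eq_ncard_inversions finSupp_one, inversions_one, Set.ncard_empty]

lemma eq_one_of_len_eq_zero (hw : FinSupp w) (h : len w = 0) : w = 1 := by
  rwa [len_eq_ncard_inversions hw, Set.ncard_eq_zero hw.inversions_finite,
    inversions_eq_empty_iff] at h

lemma len_mul_sw_of_lt (hw : FinSupp w) (h : w i < w (i + 1)) : len (w * sw i) = len w + 1 := by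
  rw [len_eq_ncard_inversions (hw.mul_sw i), len_eq_ncard_inversions hw,
    ncard_inversions_mul_sw hw h]

lemma len_mul_sw_of_gt (hw : FinSupp w) (h : w (i + 1) < w i) : len (w * sw i) + 1 = len w := by
  rw [len_eq_ncard_inversions (hw.mul_sw i), len_eq_ncard_inversions hw,
    ncard_inversions_mul_sw_of_gt hw h]

end Length


section ReducedWords

variable {v w : Perm ℕ} {i : ℕ} {l : List ℕ}

lemma mem_Red_iff : l ∈ Red w ↔ l.length = len w ∧ wordProd l = w := Iff.rfl

lemma finSupp_of_mem_Red (h : l ∈ Red w) : FinSupp w := h.2 ▸ finSupp_wordProd l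

lemma exists_mem_Red (hw : FinSupp w) : ∃ l, l ∈ Red w := by
  obtain ⟨l, hl, hlen⟩ := exists_wordProd_eq hw
  exact ⟨l, by rw [hlen, len_eq_ncard_inversions hw], hl⟩

def redWord (w : Perm ℕ) : List ℕ := Classical.epsilon (· ∈ Red w)

lemma redWord_mem_Red (hw : FinSupp w) : redWord w ∈ Red w :=
  Classical.epsilon_spec (exists_mem_Red hw)

lemma len_inv (hw : FinSupp w) : len w⁻¹ = len w := by
  have key {v : Perm ℕ} (hv : FinSupp v) : len v⁻¹ ≤ len v := by
    obtain ⟨hlen, hprod⟩ := mem_Red_iff.mp (redWord_mem_Red hv)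
    calc len v⁻¹ ≤ (redWord v).reverse.length := len_le_length (by rw [wordProd_reverse, hprod])
      _ = len v := by rw [List.length_reverse, hlen]
  exact le_antisymm (key hw) (by simpa using key hw.inv)

lemma concat_mem_Red_iff : l ++ [i] ∈ Red w ↔ w (i + 1) < w i ∧ l ∈ Red (w * sw i) := by
  constructor
  · intro h
    have hw := finSupp_of_mem_Red h
    obtain ⟨hlen, hprod⟩ := mem_Red_iff.mp h
    rw [wordProd_concat] at hprod
    have hl : wordProd l = w * sw i := by rw [← hprod, mul_sw_mul_sw]
    have hle := len_le_length hl
    simp only [List.length_append, List.length_singleton] at hlen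
    rcases apply_lt_or_gt_apply_succ w i with hasc | hdesc
    · have := len_mul_sw_of_lt hw hasc
      omega
    · have := len_mul_sw_of_gt hw hdesc
      exact ⟨hdesc, mem_Red_iff.mpr ⟨by omega, hl⟩⟩
  · rintro ⟨hdesc, hl⟩
    have hw : FinSupp w := by simpa using (finSupp_of_mem_Red hl).mul_sw i
    obtain ⟨hlen, hprod⟩ := mem_Red_iff.mp hl
    have := len_mul_sw_of_gt hw hdesc
    refine mem_Red_iff.mpr ⟨?_, by rw [wordProd_concat, hprod, mul_sw_mul_sw]⟩
    rw [List.length_append, List.length_singleton, hlen]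
    omega

lemma cons_mem_Red (hl : l ∈ Red v) (h : len (sw i * v) = len v + 1) : i :: l ∈ Red (sw i * v) :=
  mem_Red_iff.mpr ⟨by rw [List.length_cons, hl.1, h], by rw [wordProd_cons, (mem_Red_iff.mp hl).2]⟩

end ReducedWords

section WordIndependence

def ddiffWord (l : List ℕ) (f : Pol) : Pol := l.foldr ddiff f

lemma ddiffWord_cons (i : ℕ) (l : List ℕ) (f : Pol) :
    ddiffWord (i :: l) f = ddiff i (ddiffWord l f) := rfl

lemma ddiffWord_append (l₁ l₂ : List ℕ) (f : Pol) :
    ddiffWord (l₁ ++ l₂) f = ddiffWord l₁ (ddiffWord l₂ f) :=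
  List.foldr_append ..

lemma ddiffWord_concat (l : List ℕ) (i : ℕ) (f : Pol) :
    ddiffWord (l ++ [i]) f = ddiffWord l (ddiff i f) :=
  ddiffWord_append l [i] f

variable {w : Perm ℕ} {i j : ℕ}

lemma exists_mem_Red_of_far_descents (hw : FinSupp w) (hi : w (i + 1) < w i)
    (hj : w (j + 1) < w j) (hij : i + 2 ≤ j) :
    ∃ m, m ++ [j] ++ [i] ∈ Red w ∧ m ++ [i] ++ [j] ∈ Red w := by
  have hv : FinSupp (w * sw i * sw j) := (hw.mul_sw i).mul_sw j
  refine ⟨redWord (w * sw i * sw j), ?_, ?_⟩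
  · refine concat_mem_Red_iff.mpr ⟨hi, concat_mem_Red_iff.mpr ⟨?_, redWord_mem_Red hv⟩⟩
    simp only [Perm.mul_apply, swap_apply_def]
    split_ifs <;> omega
  · rw [mul_assoc w, sw_mul_sw_comm (by omega), ← mul_assoc]
    refine concat_mem_Red_iff.mpr ⟨hj, concat_mem_Red_iff.mpr ⟨?_, redWord_mem_Red ?_⟩⟩
    · simp only [Perm.mul_apply, swap_apply_def]
      split_ifs <;> omega
    · rwa [mul_assoc w, ← sw_mul_sw_comm (by omega), ← mul_assoc]

lemma exists_mem_Red_of_adjacent_descents (hw : FinSupp w) (hi : w (i + 1) < w i)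
    (hi' : w (i + 2) < w (i + 1)) :
    ∃ m, m ++ [i] ++ [i + 1] ++ [i] ∈ Red w ∧ m ++ [i + 1] ++ [i] ++ [i + 1] ∈ Red w := by
  have hv : FinSupp (w * sw i * sw (i + 1) * sw i) := ((hw.mul_sw i).mul_sw (i + 1)).mul_sw i
  refine ⟨redWord (w * sw i * sw (i + 1) * sw i), ?_, ?_⟩
  · refine concat_mem_Red_iff.mpr ⟨hi, concat_mem_Red_iff.mpr ⟨?_, concat_mem_Red_iff.mpr
      ⟨?_, redWord_mem_Red hv⟩⟩⟩ <;>
    · simp only [Perm.mul_apply, swap_apply_def, show i + 1 + 1 = i + 2 from rfl]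
      split_ifs <;> omega
  · have hbraid : w * sw (i + 1) * sw i * sw (i + 1) = w * sw i * sw (i + 1) * sw i := by
      simp only [mul_assoc]
      congr 1
      simpa only [mul_assoc] using (sw_braid i).symm
    refine concat_mem_Red_iff.mpr ⟨hi', concat_mem_Red_iff.mpr ⟨?_, concat_mem_Red_iff.mpr
      ⟨?_, by rw [hbraid]; exact redWord_mem_Red hv⟩⟩⟩ <;>
    · simp only [Perm.mul_apply, swap_apply_def, show i + 1 + 1 = i + 2 from rfl]
      split_ifs <;> omega

theorem ddiffWord_eq_of_mem_Red {l l' : List ℕ} (hl : l ∈ Red w) (hl' : l' ∈ Red w) (f : Pol) :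
    ddiffWord l f = ddiffWord l' f := by
  induction hk : len w using Nat.strong_induction_on generalizing w l l' f with
  | _ k ih =>
  have hw := finSupp_of_mem_Red hl
  have same_last {t t' : List ℕ} {a : ℕ} (ht : t ++ [a] ∈ Red w) (ht' : t' ++ [a] ∈ Red w)
      (g : Pol) : ddiffWord (t ++ [a]) g = ddiffWord (t' ++ [a]) g := by
    obtain ⟨ha, ht⟩ := concat_mem_Red_iff.mp ht
    have := len_mul_sw_of_gt hw ha
    rw [ddiffWord_concat, ddiffWord_concat,
      ih _ (by omega) ht (concat_mem_Red_iff.mp ht').2 _ rfl]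
  rcases l.eq_nil_or_concat' with rfl | ⟨t, i, rfl⟩
  · rw [List.eq_nil_of_length_eq_zero ((mem_Red_iff.mp hl').1.trans (mem_Red_iff.mp hl).1.symm)]
  rcases l'.eq_nil_or_concat' with rfl | ⟨t', j, rfl⟩
  · rw [List.eq_nil_of_length_eq_zero ((mem_Red_iff.mp hl).1.trans (mem_Red_iff.mp hl').1.symm)]
  wlog hij : i ≤ j generalizing t t' i j
  · exact (this t' j hl' t i hl (by omega)).symm
  have hi := (concat_mem_Red_iff.mp hl).1
  have hj := (concat_mem_Red_iff.mp hl').1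
  obtain rfl | rfl | hij : i = j ∨ j = i + 1 ∨ i + 2 ≤ j := by omega
  · exact same_last hl hl' f
  · obtain ⟨m, hm, hm'⟩ := exists_mem_Red_of_adjacent_descents hw hi hj
    rw [same_last hl hm, ← same_last hm' hl']
    simp only [ddiffWord_concat, ddiff_braid]
  · obtain ⟨m, hm, hm'⟩ := exists_mem_Red_of_far_descents hw hi hj hij
    rw [same_last hl hm, ← same_last hm' hl']
    simp only [ddiffWord_concat, ddiff_comm hij]

end WordIndependence

section LongestElement

open Finset

def longestElem (n : ℕ) : Perm ℕ :=
  Function.Involutive.toPerm (fun x => if x < n then n - 1 - x else x) fun x => by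
    dsimp only
    split_ifs <;> omega

variable {w : Perm ℕ} {n : ℕ}

lemma longestElem_apply (n x : ℕ) : longestElem n x = if x < n then n - 1 - x else x := rfl

lemma supportedBelow_longestElem (n : ℕ) : SupportedBelow (longestElem n) n :=
  fun x hx => by rw [longestElem_apply, if_neg (by omega)]

lemma longestElem_mul_self (n : ℕ) : longestElem n * longestElem n = 1 := by
  ext x
  simp only [Perm.mul_apply, Perm.one_apply, longestElem_apply]
  split_ifs <;> omega

lemma longestElem_inv (n : ℕ) : (longestElem n)⁻¹ = longestElem n :=
  inv_eq_of_mul_eq_one_left (longestElem_mul_self n)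

lemma longestElem_zero : longestElem 0 = 1 := by
  ext x
  simp [longestElem_apply]

lemma SupportedBelow.inversions_longestElem_mul (h : SupportedBelow w n) :
    inversions (longestElem n * w) = ↑(pairsBelow n) \ inversions w := by
  ext ⟨a, b⟩
  by_cases hab : (a, b) ∈ pairsBelow n
  · simp only [pairsBelow, mem_filter, mem_product, mem_range] at hab
    have hwa := h.apply_lt hab.1.1
    have hwb := h.apply_lt hab.1.2
    have hne : w a ≠ w b := w.injective.ne (by omega)
    simp only [inversions, Set.mem_sdiff, Set.mem_ofPred_eq, Perm.mul_apply, longestElem_apply,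
      if_pos hwa, if_pos hwb, pairsBelow, coe_filter, mem_product, mem_range]
    omega
  · have hsub := ((supportedBelow_longestElem n).mul h).inversions_subset
    exact iff_of_false (fun hmem => hab (hsub hmem)) fun hmem => hab hmem.1

lemma inversions_longestElem (n : ℕ) : inversions (longestElem n) = pairsBelow n := by
  simpa [inversions_one] using (SupportedBelow.inversions_longestElem_mul (w := 1)
    (n := n) fun _ _ => rfl)

lemma len_longestElem (n : ℕ) : len (longestElem n) = ∑ j ∈ range n, j := by
  rw [len_eq_ncard_inversions (supportedBelow_longestElem n).finSupp, inversions_longestElem,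
    Set.ncard_coe_finset, card_pairsBelow]

lemma SupportedBelow.len_inv_mul_longestElem (h : SupportedBelow w n) :
    len (w⁻¹ * longestElem n) + len w = len (longestElem n) := by
  have hw0 := (supportedBelow_longestElem n).mul h
  have hfin := h.finSupp.inversions_finite
  rw [← len_inv (h.inv.mul (supportedBelow_longestElem n)).finSupp, mul_inv_rev, inv_inv,
    longestElem_inv, len_eq_ncard_inversions hw0.finSupp, len_eq_ncard_inversions h.finSupp,
    len_eq_ncard_inversions (supportedBelow_longestElem n).finSupp,
    h.inversions_longestElem_mul, inversions_longestElem,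
    Set.ncard_sdiff h.inversions_subset hfin]
  have := Set.ncard_le_ncard h.inversions_subset (pairsBelow n).finite_toSet
  omega

end LongestElement

section Staircase

open Finset

def staircase (n : ℕ) : Pol := ∏ j ∈ range n, X j ^ (n - 1 - j)

lemma isHomogeneous_staircase (n : ℕ) : (staircase n).IsHomogeneous (∑ j ∈ range n, j) := by
  rw [← sum_range_reflect]
  exact IsHomogeneous.prod _ _ _ fun j _ => isHomogeneous_X_pow j _

/-- The image of `staircase (n + 1)` under `∂_{k-1} ⋯ ∂_0`. -/
def partialStaircase (n k : ℕ) : Pol :=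
  ∏ j ∈ range (n + 1), X j ^ (if j < k then n - 1 - j else n - j)

lemma partialStaircase_zero (n : ℕ) : partialStaircase n 0 = staircase (n + 1) :=
  prod_congr rfl fun j _ => by rw [if_neg (Nat.not_lt_zero j), Nat.add_sub_cancel]

lemma partialStaircase_self (n : ℕ) : partialStaircase n n = staircase n := by
  rw [partialStaircase, prod_range_succ, if_neg (lt_irrefl n), Nat.sub_self, pow_zero, mul_one]
  exact prod_congr rfl fun j hj => by rw [if_pos (mem_range.mp hj)]

lemma partialStaircase_eq_X_mul {n k : ℕ} (hk : k < n) :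
    partialStaircase n k = X k * partialStaircase n (k + 1) := by
  have hmem : k ∈ range (n + 1) := mem_range.mpr (by omega)
  rw [partialStaircase, partialStaircase, ← mul_prod_erase _ _ hmem, ← mul_prod_erase _ _ hmem,
    ← mul_assoc, ← pow_succ', if_neg (lt_irrefl k), if_pos (Nat.lt_succ_self k)]
  congr 1
  · congr 1
    omega
  · refine prod_congr rfl fun j hj => ?_
    have := ne_of_mem_erase hj
    congr 1
    split_ifs <;> omega

lemma swapVar_partialStaircase {n k : ℕ} (hk : k < n) :
    swapVar k (partialStaircase n (k + 1)) = partialStaircase n (k + 1) := by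
  simp only [partialStaircase, swapVar, map_prod, map_pow, rename_X]
  refine prod_equiv (sw k) (fun j => ?_) fun j _ => ?_
  · simp only [mem_range, swap_apply_def]
    split_ifs <;> omega
  · simp only [swap_apply_def]
    split_ifs <;> congr 1 <;> omega

lemma ddiffWord_staircase_succ (n : ℕ) :
    ddiffWord (List.range n).reverse (staircase (n + 1)) = staircase n := by
  suffices h : ∀ k ≤ n, ddiffWord (List.range k).reverse (staircase (n + 1)) =
      partialStaircase n k by
    rw [h n le_rfl, partialStaircase_self]
  intro k hk
  induction k with
  | zero => exact (partialStaircase_zero n).symm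
  | succ k ih =>
    rw [List.range_succ, List.reverse_concat', ddiffWord_cons, ih (by omega),
      partialStaircase_eq_X_mul (by omega),
      ddiff_X_mul_of_swapVar_eq (swapVar_partialStaircase (by omega))]

lemma wordProd_reverse_range (n : ℕ) :
    wordProd (List.range n).reverse = longestElem n * longestElem (n + 1) := by
  induction n with
  | zero => ext x; simp [longestElem_apply]
  | succ n ih =>
    rw [List.range_succ, List.reverse_concat', wordProd_cons, ih]
    ext x
    simp only [Perm.mul_apply, longestElem_apply, swap_apply_def]
    split_ifs <;> omega

end Staircase

section SchubertPolynomial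

open Finset

def schubertAt (n : ℕ) (w : Perm ℕ) : Pol :=
  ddiffWord (redWord (w⁻¹ * longestElem n)) (staircase n)

variable {w : Perm ℕ} {i n : ℕ} {l : List ℕ}

lemma SupportedBelow.finSupp_inv_mul_longestElem (h : SupportedBelow w n) :
    FinSupp (w⁻¹ * longestElem n) :=
  (h.inv.mul (supportedBelow_longestElem n)).finSupp

lemma SupportedBelow.schubertAt_eq (h : SupportedBelow w n)
    (hl : l ∈ Red (w⁻¹ * longestElem n)) : schubertAt n w = ddiffWord l (staircase n) :=
  ddiffWord_eq_of_mem_Red (redWord_mem_Red h.finSupp_inv_mul_longestElem) hl _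

lemma SupportedBelow.schubertAt_succ (h : SupportedBelow w n) :
    schubertAt (n + 1) w = schubertAt n w := by
  have h' := h.mono (Nat.le_add_right n 1)
  have hred := redWord_mem_Red h.finSupp_inv_mul_longestElem
  have hlen := h.len_inv_mul_longestElem
  have hlen' := h'.len_inv_mul_longestElem
  rw [len_longestElem] at hlen hlen'
  rw [sum_range_succ] at hlen'
  have hcat : redWord (w⁻¹ * longestElem n) ++ (List.range n).reverse ∈
      Red (w⁻¹ * longestElem (n + 1)) := by
    refine mem_Red_iff.mpr ⟨?_, ?_⟩
    · rw [List.length_append, List.length_reverse, List.length_range, hred.1]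
      omega
    · rw [wordProd_append, (mem_Red_iff.mp hred).2, wordProd_reverse_range, mul_assoc,
        ← mul_assoc (longestElem n), longestElem_mul_self, one_mul]
  rw [h'.schubertAt_eq hcat, ddiffWord_append, ddiffWord_staircase_succ]
  rfl

lemma SupportedBelow.schubertAt_eq_of_le (h : SupportedBelow w n) {m : ℕ} (hnm : n ≤ m) :
    schubertAt m w = schubertAt n w := by
  induction m, hnm using Nat.le_induction with
  | base => rfl
  | succ m hnm ih => rw [(h.mono hnm).schubertAt_succ, ih]

def schubert (w : Perm ℕ) : Pol := schubertAt (Classical.epsilon (SupportedBelow w)) w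

lemma SupportedBelow.schubert_eq (h : SupportedBelow w n) : schubert w = schubertAt n w := by
  have h₀ : SupportedBelow w (Classical.epsilon (SupportedBelow w)) :=
    Classical.epsilon_spec ⟨n, h⟩
  rw [schubert, ← h₀.schubertAt_eq_of_le (le_max_left _ n),
    h.schubertAt_eq_of_le (le_max_right _ n)]

lemma schubert_one : schubert 1 = 1 := by
  have h : SupportedBelow 1 0 := fun _ _ => rfl
  have hnil : [] ∈ Red (1⁻¹ * longestElem 0) := by
    rw [longestElem_zero, mul_one, inv_one]
    exact ⟨len_one.symm, rfl⟩
  rw [h.schubert_eq, h.schubertAt_eq hnil]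
  simp only [ddiffWord, List.foldr_nil, staircase, prod_range_zero]

lemma isHomogeneous_ddiffWord (l : List ℕ) {f : Pol} {d : ℕ}
    (hf : f.IsHomogeneous (d + l.length)) : (ddiffWord l f).IsHomogeneous d := by
  induction l generalizing d with
  | nil => exact hf
  | cons i t ih =>
    exact isHomogeneous_ddiff (ih (by rwa [List.length_cons, ← add_assoc, add_right_comm] at hf)) i

lemma isHomogeneous_schubert (hw : FinSupp w) : (schubert w).IsHomogeneous (len w) := by
  obtain ⟨n, h⟩ := finSupp_iff_exists_supportedBelow.mp hw
  have hred := redWord_mem_Red h.finSupp_inv_mul_longestElem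
  have hlen := h.len_inv_mul_longestElem
  rw [h.schubert_eq, schubertAt]
  refine isHomogeneous_ddiffWord _ ?_
  rw [(mem_Red_iff.mp hred).1, add_comm, hlen, len_longestElem]
  exact isHomogeneous_staircase n

lemma ddiff_schubert (hw : FinSupp w) (i : ℕ) :
    ddiff i (schubert w) = if w (i + 1) < w i then schubert (w * sw i) else 0 := by
  obtain ⟨n₀, h₀⟩ := finSupp_iff_exists_supportedBelow.mp hw
  have h := h₀.mono (le_max_left n₀ (i + 2))
  have h' := h.mul (supportedBelow_sw (le_max_right n₀ (i + 2)))
  set n := max n₀ (i + 2)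
  have hu : (w * sw i)⁻¹ * longestElem n = sw i * (w⁻¹ * longestElem n) := by
    rw [mul_inv_rev, swap_inv, mul_assoc]
  have hlen := h.len_inv_mul_longestElem
  have hlen' := h'.len_inv_mul_longestElem
  rw [hu] at hlen'
  rw [h.schubert_eq, h'.schubert_eq]
  split_ifs with hdesc
  · have := len_mul_sw_of_gt hw hdesc
    have hred := redWord_mem_Red h.finSupp_inv_mul_longestElem
    rw [h'.schubertAt_eq (l := i :: redWord (w⁻¹ * longestElem n))
      (hu ▸ cons_mem_Red hred (by omega)), ddiffWord_cons, schubertAt]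
  · have := len_mul_sw_of_lt hw ((apply_lt_or_gt_apply_succ w i).resolve_right hdesc)
    have hred := redWord_mem_Red h'.finSupp_inv_mul_longestElem
    rw [hu] at hred
    have hcons := cons_mem_Red (i := i) hred (by rw [sw_mul_sw_mul]; omega)
    rw [sw_mul_sw_mul] at hcons
    rw [h.schubertAt_eq hcons, ddiffWord_cons, ddiff_ddiff]

theorem isSchubertFamily_schubert : IsSchubertFamily schubert :=
  ⟨fun _ => isHomogeneous_schubert, schubert_one, fun _ => ddiff_schubert⟩

end SchubertPolynomial

section Uniqueness

variable {f : Pol} {i : ℕ}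

lemma succ_mem_vars_of_swapVar_eq (h : swapVar i f = f) (hi : i ∈ f.vars) : i + 1 ∈ f.vars := by
  rw [← h] at hi
  obtain ⟨j, hj, hji⟩ := Finset.mem_image.mp (vars_rename _ f hi)
  have : j = i + 1 := by
    simp only [swap_apply_def] at hji
    split_ifs at hji <;> omega
  exact this ▸ hj

lemma vars_eq_empty_of_forall_swapVar_eq (h : ∀ i, swapVar i f = f) : f.vars = ∅ := by
  by_contra hne
  obtain ⟨j, hj⟩ := Finset.nonempty_iff_ne_empty.mpr hne
  have hmem : ∀ k, j + k ∈ f.vars := fun k => by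
    induction k with
    | zero => exact hj
    | succ k ih => exact succ_mem_vars_of_swapVar_eq (h _) ih
  have := Finset.le_sup (f := id) (hmem (f.vars.sup id + 1))
  simp only [id] at this
  omega

lemma eq_zero_of_forall_swapVar_eq {m : ℕ} (hf : f.IsHomogeneous m) (hm : m ≠ 0)
    (h : ∀ i, swapVar i f = f) : f = 0 := by
  rw [vars_eq_empty_iff_eq_C.mp (vars_eq_empty_of_forall_swapVar_eq h),
    hf.coeff_eq_zero (by simpa using hm.symm), map_zero]

theorem _root_.IsSchubertFamily.eq_of_finSupp {S S' : Perm ℕ → Pol} (hS : IsSchubertFamily S)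
    (hS' : IsSchubertFamily S') {w : Perm ℕ} (hw : FinSupp w) : S w = S' w := by
  induction hk : len w using Nat.strong_induction_on generalizing w with
  | _ k ih =>
  obtain ⟨hhom, hone, hdiff⟩ := hS
  obtain ⟨hhom', hone', hdiff'⟩ := hS'
  rcases Nat.eq_zero_or_pos k with rfl | hk0
  · rw [eq_one_of_len_eq_zero hw hk, hone, hone']
  rw [← sub_eq_zero]
  refine eq_zero_of_forall_swapVar_eq ((hhom w hw).sub (hhom' w hw)) (by omega) fun i => ?_
  rw [← ddiff_eq_zero_iff, ddiff_sub, hdiff w hw, hdiff' w hw]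
  split_ifs with hdesc
  · have := len_mul_sw_of_gt hw hdesc
    rw [ih _ (by omega) (hw.mul_sw i) rfl, sub_self]
  · exact sub_self 0

end Uniqueness

end Schubert

end

/-- existence and uniqueness of the family of Schubert polynomials. -/
theorem stmt_2 :
    (∃ S : Equiv.Perm ℕ → Pol, IsSchubertFamily S) ∧
    ∀ S S' : Equiv.Perm ℕ → Pol, IsSchubertFamily S → IsSchubertFamily S' →
      ∀ w, FinSupp w → S w = S' w :=
  ⟨⟨Schubert.schubert, Schubert.isSchubertFamily_schubert⟩,
    fun _ _ hS hS' _ hw => hS.eq_of_finSupp hS' hw⟩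
end

section
/- Fix an integer m ≥ 1. For every i ≥ 1 and f ∈ Poly, the polynomial (R_{i+1}^m − R_i^m)f is divisible by x_i, so the m-quasisymmetric divided difference T_i^{(m)} f = ((R_{i+1}^m − R_i^m)f)/x_i is well defined; and for every f ∈ Poly⁺ the finitely supported sum Σ_{i≥1} Z^{(m)}(x_i·T_i^{(m)} f) equals f, i.e. the operators Z^{(m)}∘x_i are creation operators for the T_i^{(m)}. -/
/-
Conventions: `Pol = MvPolynomial ℕ ℤ` with the Lean variable `X i` representing
the paper's variable `x_{i+1}` (0-indexed).  All operators carrying a paper index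
`i ≥ 1` are represented by Lean operators indexed by `i : ℕ` (Lean `i` ↔ paper `i+1`),
and sequences of positive integers are represented by sequences of natural numbers
(entry `v` ↔ paper entry `v+1`).
-/

open MvPolynomial
open scoped Classical

/-
`BSit i m` kills `x_i, …, x_{i+m-1}` and shifts the later variables down by `m`, so the
substitutions `BSit (i+1) m` and `BSit i m` agree modulo `x_i` on every variable, which gives the
divisibility. If `f` only involves `x_0, …, x_{N-1}`, then
`Σ_{i<N} (BSit (i+1) m f - BSit i m f)` telescopes to `f - BSit 0 m f`. Since
`BSit 0 n ∘ BSit i m = BSit 0 (n + m)` for `i ≤ n`, each `Zm m (X i * Tm m i f)` is the sum of its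
first `N` terms; exchanging the two finite sums, `Σ_{k<N} BSit 0 (k*m) (f - BSit 0 m f)`
telescopes to `f - BSit 0 (N*m) f = f`.
-/

open Finset

noncomputable def bsSubst (i m : ℕ) (j : ℕ) : Pol :=
  if j < i then X j else if j < i + m then 0 else X (j - m)

lemma BSit_eq_pow (i m : ℕ) : BSit i m = ⇑(BS i ^ m) := by
  funext f; rw [AlgHom.coe_pow]; rfl

lemma BS_pow_eq_aeval (i m : ℕ) : BS i ^ m = aeval (bsSubst i m) := by
  induction m with
  | zero => refine algHom_ext fun j => ?_; simp [bsSubst]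
  | succ m ih =>
    refine algHom_ext fun j => ?_
    rw [pow_succ', AlgHom.mul_apply, ih, aeval_X, aeval_X, bsSubst, bsSubst]
    split_ifs <;> simp only [BS, aeval_X, map_zero] <;> (try split_ifs) <;>
    first | rfl | omega

lemma BSit_eq_aeval (i m : ℕ) (f : Pol) : BSit i m f = aeval (bsSubst i m) f := by
  rw [BSit_eq_pow, BS_pow_eq_aeval]

lemma BSit_apply_zero (i m : ℕ) : BSit i m 0 = 0 := by
  rw [BSit_eq_pow, map_zero]

lemma BSit_sub (i m : ℕ) (f g : Pol) : BSit i m (f - g) = BSit i m f - BSit i m g := by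
  rw [BSit_eq_pow, map_sub]

lemma BSit_sum (i m : ℕ) (s : Finset ℕ) (f : ℕ → Pol) :
    BSit i m (∑ j ∈ s, f j) = ∑ j ∈ s, BSit i m (f j) := by
  rw [BSit_eq_pow, map_sum]

lemma BS_zero_pow_mul_BS_pow {i n : ℕ} (h : i ≤ n) (m : ℕ) :
    BS 0 ^ n * BS i ^ m = BS 0 ^ (n + m) := by
  refine algHom_ext fun j => ?_
  simp only [BS_pow_eq_aeval, AlgHom.mul_apply, aeval_X, bsSubst]
  split_ifs <;> simp only [aeval_X, map_zero, bsSubst] <;> (try split_ifs) <;>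
    first | rfl | omega | (congr 1; omega)

lemma dvd_aeval_sub_aeval {R S σ : Type*} [CommSemiring R] [CommRing S] [Algebra R S]
    {d : S} {g h : σ → S} (H : ∀ j, d ∣ g j - h j) (f : MvPolynomial σ R) :
    d ∣ aeval g f - aeval h f := by
  rw [← Ideal.mem_span_singleton, ← Ideal.Quotient.eq, ← Ideal.Quotient.mkₐ_eq_mk R,
    comp_aeval_apply, comp_aeval_apply]
  congr 2 with j
  exact Ideal.Quotient.eq.2 (Ideal.mem_span_singleton.2 (H j))

lemma X_dvd_BSit_succ_sub_BSit (i m : ℕ) (f : Pol) :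
    X i ∣ BSit (i + 1) m f - BSit i m f := by
  rcases Nat.eq_zero_or_pos m with rfl | hm
  · simp [BSit]
  rw [BSit_eq_aeval, BSit_eq_aeval]
  refine dvd_aeval_sub_aeval (fun j => ?_) f
  unfold bsSubst
  split_ifs <;> (try simp) <;> omega

lemma BSit_zero_BSit {i n : ℕ} (h : i ≤ n) (m : ℕ) (f : Pol) :
    BSit 0 n (BSit i m f) = BSit 0 (n + m) f := by
  rw [BSit_eq_pow, BSit_eq_pow, BSit_eq_pow, ← AlgHom.mul_apply, BS_zero_pow_mul_BS_pow h]

lemma BSit_of_vars_lt {i : ℕ} {f : Pol} (hf : ∀ j ∈ f.vars, j < i) (m : ℕ) :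
    BSit i m f = f := by
  conv_rhs => rw [← aeval_X_left_apply f]
  rw [BSit_eq_aeval, aeval_def, aeval_def]
  exact eval₂Hom_congr' rfl (fun j hj _ => by simp [bsSubst, hf j hj]) rfl

lemma BSit_zero_of_vars_lt {n : ℕ} {f : Pol} (hf0 : constantCoeff f = 0)
    (hf : ∀ j ∈ f.vars, j < n) : BSit 0 n f = 0 := by
  rw [BSit_eq_aeval, aeval_eq_constantCoeff_of_vars (fun j hj => by simp [bsSubst, hf j hj]),
    hf0, map_zero]

lemma Zm_eq_sum_range {m K : ℕ} {g : Pol} (hK : BSit 0 (K * m) g = 0) :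
    Zm m g = ∑ k ∈ range K, BSit 0 (k * m) g := by
  refine finsum_eq_sum_of_support_subset _ fun k hk => ?_
  by_contra hkK
  have hKk : K * m ≤ k * m := Nat.mul_le_mul_right m (by simpa using hkK)
  apply hk
  dsimp only
  rw [← Nat.sub_add_cancel hKk, ← BSit_zero_BSit (Nat.zero_le _), hK, BSit_apply_zero]

lemma mul_exactDiv {d f : Pol} (h : d ∣ f) : d * exactDiv d f = f := by
  have hex : ∃ g : Pol, d * g = f := by obtain ⟨c, rfl⟩ := h; exact ⟨c, rfl⟩
  rw [exactDiv, dif_pos hex]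
  exact hex.choose_spec

lemma X_mul_Tm (m i : ℕ) (f : Pol) : X i * Tm m i f = BSit (i + 1) m f - BSit i m f :=
  mul_exactDiv (X_dvd_BSit_succ_sub_BSit i m f)

lemma sum_range_BSit_succ_sub_BSit {N : ℕ} {f : Pol} (hf : ∀ j ∈ f.vars, j < N) (m : ℕ) :
    ∑ i ∈ range N, (BSit (i + 1) m f - BSit i m f) = f - BSit 0 m f := by
  rw [sum_range_sub (fun i => BSit i m f), BSit_of_vars_lt hf]

lemma sum_range_BSit_zero_mul (m N : ℕ) (f : Pol) :
    ∑ k ∈ range N, BSit 0 (k * m) (f - BSit 0 m f) = f - BSit 0 (N * m) f := by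
  have hstep (k : ℕ) :
      BSit 0 (k * m) (f - BSit 0 m f) = BSit 0 (k * m) f - BSit 0 ((k + 1) * m) f := by
    rw [BSit_sub, BSit_zero_BSit (Nat.zero_le _), Nat.succ_mul]
  simp_rw [hstep]
  rw [sum_range_sub', zero_mul]
  rfl

/-- `(R_{i+1}^m − R_i^m)f` is divisible by `x_i` (so `T_i^{(m)}` is well
defined), and the `Z^{(m)}∘x_i` are creation operators for the `T_i^{(m)}`. -/
theorem stmt_7 (m : ℕ) (hm : 1 ≤ m) :
    (∀ (i : ℕ) (f : Pol), X i ∣ (BSit (i+1) m f - BSit i m f)) ∧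
    ∀ f : Pol, constantCoeff f = 0 →
      {i : ℕ | Zm m (X i * Tm m i f) ≠ 0}.Finite ∧
      ∑ᶠ i : ℕ, Zm m (X i * Tm m i f) = f := by
  refine ⟨fun i f => X_dvd_BSit_succ_sub_BSit i m f, fun f hf0 => ?_⟩
  obtain ⟨N, hN⟩ := f.vars.exists_nat_subset_range
  have hf : ∀ j ∈ f.vars, j < N := fun j hj => mem_range.1 (hN hj)
  have hNm : N ≤ N * m := Nat.le_mul_of_pos_right N hm
  have hvanish : ∀ i, N ≤ i → BSit (i + 1) m f - BSit i m f = 0 := fun i hi => by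
    rw [BSit_of_vars_lt (by grind), BSit_of_vars_lt (by grind), sub_self]
  have hZ : ∀ i, Zm m (X i * Tm m i f) =
      ∑ k ∈ range N, BSit 0 (k * m) (BSit (i + 1) m f - BSit i m f) := fun i => by
    rw [X_mul_Tm]
    refine Zm_eq_sum_range ?_
    rcases lt_or_ge i N with hi | hi
    · rw [BSit_sub, BSit_zero_BSit (by omega), BSit_zero_BSit (by omega), sub_self]
    · rw [hvanish i hi, BSit_apply_zero]
  have hsupp : Function.support (fun i => Zm m (X i * Tm m i f)) ⊆ range N := fun i hi => by
    by_contra hiN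
    rw [Function.mem_support, hZ, hvanish i (by simpa using hiN)] at hi
    simp [BSit_apply_zero] at hi
  refine ⟨(range N).finite_toSet.subset hsupp, ?_⟩
  calc ∑ᶠ i, Zm m (X i * Tm m i f)
      = ∑ i ∈ range N, ∑ k ∈ range N, BSit 0 (k * m) (BSit (i + 1) m f - BSit i m f) := by
        rw [finsum_eq_sum_of_support_subset _ hsupp]; simp_rw [hZ]
    _ = ∑ k ∈ range N, BSit 0 (k * m) (f - BSit 0 m f) := by
        rw [sum_comm]; simp_rw [← BSit_sum, sum_range_BSit_succ_sub_BSit hf]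
    _ = f := by
        rw [sum_range_BSit_zero_mul, sub_eq_self]
        exact BSit_zero_of_vars_lt hf0 fun j hj => (hf j hj).trans_le hNm
end

section
/- For every nonempty weakly increasing sequence b = (b₁ ≤ ⋯ ≤ b_k) of positive integers and every i ≥ 1, the slide extractor satisfies D_i 𝔉_b = 𝔉_{(b₁,…,b_{k−1})} if i = b_k, and D_i 𝔉_b = 0 if i ≠ b_k. -/
/-
Conventions: `Pol = MvPolynomial ℕ ℤ` with the Lean variable `X i` representing
the paper's variable `x_{i+1}` (0-indexed).  All operators carrying a paper index
`i ≥ 1` are represented by Lean operators indexed by `i : ℕ` (Lean `i` ↔ paper `i+1`),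
and sequences of positive integers are represented by sequences of natural numbers
(entry `v` ↔ paper entry `v+1`).
-/

open MvPolynomial
open scoped Classical

/-!
Modulo `x_i - x_{i+1}` the swap `s_i` acts trivially, so `∂_i` is an exact quotient, and
`x_i · D_i f = Π_i f - Π_i (s_i f)`. For `f = 𝔉_b` both terms are sums of monomials
`x_c` over compatible sequences `c` with all entries `≤ i`: in the first all such `c`, in the
second (after reindexing by `s_i`) those for which raising every entry `i` to `i + 1` stays
compatible. The difference consists of the `c` with an entry `c_j = i = b_j`; compatibility
then forces `c` and `b` to stay equal to `i` up to the last entry, so the difference is empty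
unless `b_k = i`, and is then `x_i · 𝔉_{(b₁,…,b_{k-1})}`.
-/

open Finset

lemma exactDiv_eq_of_mul_eq {d f g : Pol} (hd : d ≠ 0) (h : d * g = f) : exactDiv d f = g := by
  have hex : ∃ g : Pol, d * g = f := ⟨g, h⟩
  rw [exactDiv, dif_pos hex]
  exact mul_left_cancel₀ hd (hex.choose_spec.trans h.symm)

lemma X_sub_X_succ_dvd_sub_swapVar (i : ℕ) (f : Pol) : X i - X (i+1) ∣ f - swapVar i f := by
  set I : Ideal Pol := Ideal.span {X i - X (i+1)}
  have hmod : (Ideal.Quotient.mkₐ ℤ I).comp (rename (Equiv.swap i (i+1))) =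
      Ideal.Quotient.mkₐ ℤ I := by
    refine MvPolynomial.algHom_ext fun v => ?_
    rw [AlgHom.comp_apply, rename_X, Ideal.Quotient.mkₐ_eq_mk, Ideal.Quotient.eq,
      Ideal.mem_span_singleton, Equiv.swap_apply_def]
    split_ifs with h1 h2
    · rw [h1]; exact ⟨-1, by ring⟩
    · rw [h2]
    · rw [sub_self]; exact dvd_zero _
  rw [← Ideal.mem_span_singleton, ← Ideal.Quotient.eq, ← Ideal.Quotient.mkₐ_eq_mk ℤ, swapVar,
    ← AlgHom.comp_apply, hmod]

lemma X_sub_X_succ_mul_ddiff (i : ℕ) (f : Pol) :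
    (X i - X (i+1)) * ddiff i f = f - swapVar i f := by
  obtain ⟨g, hg⟩ := X_sub_X_succ_dvd_sub_swapVar i f
  have hne : (X i - X (i+1) : Pol) ≠ 0 :=
    sub_ne_zero.mpr fun h => by have := X_injective h; omega
  rw [ddiff, exactDiv_eq_of_mul_eq hne hg.symm, hg]

lemma truncOp_X (n v : ℕ) : truncOp n (X v) = if v < n then X v else 0 := by
  simp [truncOp]

lemma X_mul_Dop (i : ℕ) (f : Pol) :
    X i * Dop i f = truncOp (i+1) f - truncOp (i+1) (swapVar i f) := by
  have h := congrArg (truncOp (i+1)) (X_sub_X_succ_mul_ddiff i f)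
  rwa [map_mul, map_sub, map_sub, truncOp_X, truncOp_X, if_pos i.lt_succ_self,
    if_neg (lt_irrefl _), sub_zero] at h

lemma truncOp_prod_X {k : ℕ} (n : ℕ) (c : Fin k → ℕ) :
    truncOp n (∏ j, X (c j)) = if ∀ j, c j < n then ∏ j, X (c j) else 0 := by
  simp only [map_prod, truncOp_X]
  rw [Fintype.prod_ite_zero]
  congr

lemma swapVar_prod_X {k : ℕ} (i : ℕ) (c : Fin k → ℕ) :
    swapVar i (∏ j, X (c j)) = ∏ j, X (Equiv.swap i (i+1) (c j)) := by
  simp [swapVar]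

lemma strictMonoOn_swap_succ {i : ℕ} {s : Set ℕ} (hs : i ∈ s → i + 1 ∉ s) :
    StrictMonoOn (Equiv.swap i (i+1)) s := by
  intro x hx y hy hxy
  by_cases hxy' : x = i ∧ y = i + 1
  · obtain ⟨rfl, rfl⟩ := hxy'
    exact absurd hy (hs hx)
  · simp only [Equiv.swap_apply_def]
    split_ifs <;> omega

lemma Compat.comp {k : ℕ} {a c : Fin k → ℕ} (hc : Compat a c) {φ : ℕ → ℕ}
    (hφ : StrictMonoOn φ (Set.range c)) (hle : ∀ j, φ (c j) ≤ a j) : Compat a (φ ∘ c) :=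
  ⟨fun _ _ hxy => hφ.monotoneOn ⟨_, rfl⟩ ⟨_, rfl⟩ (hc.1 hxy), hle,
    fun j h hlt => hφ ⟨_, rfl⟩ ⟨_, rfl⟩ (hc.2.2 j h hlt)⟩

lemma Compat.swap_comp {k i : ℕ} {a c : Fin k → ℕ} (hc : Compat a c)
    (hlt : ∀ j, Equiv.swap i (i+1) (c j) < i + 1) : Compat a (Equiv.swap i (i+1) ∘ c) := by
  have hne : ∀ j, c j ≠ i := fun j h => by
    have := hlt j; rw [h, Equiv.swap_apply_left] at this; omega
  refine hc.comp (strictMonoOn_swap_succ ?_) fun j => ?_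
  · rintro ⟨j, hj⟩; exact absurd hj (hne j)
  · have := hc.2.1 j; have := hne j
    rw [Equiv.swap_apply_def]; split_ifs <;> omega

lemma compat_swap_comp_iff {k i : ℕ} {a c : Fin k → ℕ} (hc : Compat a c)
    (hlt : ∀ j, c j < i + 1) :
    Compat a (Equiv.swap i (i+1) ∘ c) ↔ ∀ j, c j = i → i < a j := by
  refine ⟨fun hs j hj => ?_, fun h => hc.comp (strictMonoOn_swap_succ ?_) fun j => ?_⟩
  · have := hs.2.1 j
    rwa [Function.comp_apply, hj, Equiv.swap_apply_left, Nat.succ_le_iff] at this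
  · rintro - ⟨j, hj⟩; have := hlt j; omega
  · have := hc.2.1 j; have := hlt j; have := h j
    rw [Equiv.swap_apply_def]; split_ifs <;> omega

lemma Compat.last_eq {k i : ℕ} {a c : Fin (k+1) → ℕ} (ha : Monotone a) (hc : Compat a c)
    (hle : ∀ j, c j ≤ i) {j : Fin (k+1)} (hcj : c j = i) (haj : a j = i) :
    a (Fin.last k) = i ∧ c (Fin.last k) = i := by
  suffices h : ∀ m, j.val ≤ m → ∀ hm : m < k + 1, a ⟨m, hm⟩ = i ∧ c ⟨m, hm⟩ = i from
    h k (Nat.lt_succ_iff.mp j.isLt) k.lt_succ_self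
  intro m hjm
  induction m, hjm using Nat.le_induction with
  | base => exact fun _ => ⟨haj, hcj⟩
  | succ m _ ih =>
    intro hm
    obtain ⟨ham, hcm⟩ := ih (by omega)
    have hstep : (⟨m, by omega⟩ : Fin (k+1)) ≤ ⟨m + 1, hm⟩ := Fin.mk_le_mk.mpr m.le_succ
    have := ha hstep; have := hc.1 hstep; have := hle ⟨m + 1, hm⟩
    -- a strict increase of `a` at `m` would force one of `c`, which is pinned at `i`
    have hnot := mt (hc.2.2 m hm) (by omega)
    omega

lemma compat_iff_init {k : ℕ} {a c : Fin (k+1) → ℕ} (ha : Monotone a)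
    (hlast : c (Fin.last k) = a (Fin.last k)) :
    Compat a c ↔ Compat (Fin.init a) (Fin.init c) := by
  refine ⟨fun ⟨hmono, hle, hlt⟩ =>
    ⟨hmono.comp Fin.strictMono_castSucc.monotone, fun j => hle _, fun j h => hlt j (by omega)⟩,
    fun ⟨hmono, hle, hlt⟩ => ?_⟩
  have hle' : ∀ j, c j ≤ a j := Fin.lastCases hlast.le fun j => hle j
  refine ⟨?_, hle', fun j h hj => ?_⟩
  · intro x y hxy
    induction y using Fin.lastCases with
    | last => exact (hle' x).trans (hlast ▸ ha (Fin.le_last x))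
    | cast y =>
      induction x using Fin.lastCases with
      | last => exact absurd hxy (not_le.mpr (Fin.castSucc_lt_last y))
      | cast x => exact hmono (Fin.castSucc_le_castSucc_iff.mp hxy)
  · rcases Nat.lt_or_ge (j + 1) k with hk | hk
    · exact hlt j hk hj
    · have hl : (⟨j + 1, h⟩ : Fin (k+1)) = Fin.last k := Fin.ext (by simp; omega)
      have := hle' ⟨j, by omega⟩
      rw [hl] at hj ⊢
      rw [hlast]
      omega

noncomputable def compatSet {k : ℕ} (a : Fin k → ℕ) : Finset (Fin k → ℕ) :=
  (Iic a).filter (Compat a)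

lemma mem_compatSet {k : ℕ} {a c : Fin k → ℕ} : c ∈ compatSet a ↔ Compat a c := by
  simp only [compatSet, mem_filter, mem_Iic, and_iff_right_iff_imp]
  exact fun hc => hc.2.1

lemma slide_eq_sum {k : ℕ} (a : Fin k → ℕ) : slide a = ∑ c ∈ compatSet a, ∏ j, X (c j) := by
  have hset : {c | Compat a c} = (compatSet a : Set (Fin k → ℕ)) := by
    ext c; exact mem_compatSet.symm
  rw [slide, hset, finsum_mem_coe_finset]

lemma truncOp_slide {k : ℕ} (a : Fin k → ℕ) (n : ℕ) :
    truncOp n (slide a) = ∑ c ∈ (compatSet a).filter (fun c => ∀ j, c j < n), ∏ j, X (c j) := by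
  rw [slide_eq_sum, map_sum, sum_filter]
  exact sum_congr rfl fun c _ => truncOp_prod_X n c

lemma truncOp_swapVar_slide {k : ℕ} (a : Fin k → ℕ) (i : ℕ) :
    truncOp (i+1) (swapVar i (slide a)) =
      ∑ c ∈ ((compatSet a).filter fun c => ∀ j, c j < i + 1).filter
        (fun c => Compat a (Equiv.swap i (i+1) ∘ c)), ∏ j, X (c j) := by
  set σ := Equiv.swap i (i+1)
  calc truncOp (i+1) (swapVar i (slide a))
      = ∑ c ∈ (compatSet a).filter (fun c => ∀ j, σ (c j) < i + 1), ∏ j, X (σ (c j)) := by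
        rw [slide_eq_sum, swapVar, map_sum, map_sum, sum_filter]
        refine sum_congr rfl fun c _ => ?_
        rw [← swapVar, swapVar_prod_X]
        exact truncOp_prod_X _ (σ ∘ c)
    _ = _ := by
      have hσσ : ∀ c : Fin k → ℕ, σ ∘ σ ∘ c = c :=
        fun c => funext fun _ => Equiv.swap_apply_self _ _ _
      refine sum_nbij' (σ ∘ ·) (σ ∘ ·) (fun c hc => ?_) (fun c hc => ?_)
        (fun c _ => hσσ c) (fun c _ => hσσ c) fun _ _ => rfl
      · simp only [mem_filter, mem_compatSet] at hc ⊢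
        exact ⟨⟨hc.1.swap_comp hc.2, hc.2⟩, (hσσ c).symm ▸ hc.1⟩
      · simp only [mem_filter, mem_compatSet] at hc ⊢
        exact ⟨hc.2, fun j => by simpa [σ] using hc.1.2 j⟩

lemma truncOp_sub_truncOp_swapVar_slide {k : ℕ} {a : Fin (k+1) → ℕ} (ha : Monotone a) (i : ℕ) :
    truncOp (i+1) (slide a) - truncOp (i+1) (swapVar i (slide a)) =
      ∑ c ∈ (compatSet a).filter (fun c => a (Fin.last k) = i ∧ c (Fin.last k) = i),
        ∏ j, X (c j) := by
  rw [truncOp_slide, truncOp_swapVar_slide, ← sum_filter_add_sum_filter_not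
    ((compatSet a).filter _) (fun c => Compat a (Equiv.swap i (i+1) ∘ c)), add_sub_cancel_left]
  congr 1
  ext c
  simp only [mem_filter, mem_compatSet]
  constructor
  · rintro ⟨⟨hc, hlt⟩, hswap⟩
    rw [compat_swap_comp_iff hc hlt] at hswap
    push Not at hswap
    obtain ⟨j, hcj, haj⟩ := hswap
    exact ⟨hc, hc.last_eq ha (fun j => Nat.lt_succ_iff.mp (hlt j)) hcj
      (le_antisymm haj (hcj ▸ hc.2.1 j))⟩
  · rintro ⟨hc, hal, hcl⟩
    have hlt : ∀ j, c j < i + 1 := fun j => Nat.lt_succ_iff.mpr (hcl ▸ hc.1 (Fin.le_last j))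
    refine ⟨⟨hc, hlt⟩, fun hswap => ?_⟩
    have := (compat_swap_comp_iff hc hlt).mp hswap _ hcl
    omega

lemma sum_compatSet_filter_last {k : ℕ} {a : Fin (k+1) → ℕ} (ha : Monotone a) :
    ∑ c ∈ (compatSet a).filter (fun c => c (Fin.last k) = a (Fin.last k)), ∏ j, X (c j) =
      X (a (Fin.last k)) * slide (a ∘ Fin.castSucc) := by
  rw [slide_eq_sum, mul_sum]
  refine sum_nbij' Fin.init (fun e => (Fin.snoc e (a (Fin.last k)) : Fin (k+1) → ℕ))
    (fun c hc => ?_) (fun e he => ?_) (fun c hc => ?_) (fun e _ => Fin.init_snoc _ _)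
    (fun c hc => ?_)
  · rw [mem_filter, mem_compatSet] at hc
    exact mem_compatSet.mpr ((compat_iff_init ha hc.2).mp hc.1)
  · rw [mem_filter, mem_compatSet, Fin.snoc_last]
    refine ⟨(compat_iff_init ha (Fin.snoc_last _ _)).mpr ?_, rfl⟩
    rw [Fin.init_snoc]
    exact mem_compatSet.mp he
  · rw [← (mem_filter.mp hc).2]
    exact Fin.snoc_init_self c
  · rw [Fin.prod_univ_castSucc, (mem_filter.mp hc).2, mul_comm]
    rfl

/-- for a nonempty weakly increasing sequence `b`, the slide extractor
satisfies `D_i 𝔉_b = 𝔉_{b minus last entry}` if `i` is the last entry of `b`, else `0`. -/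
theorem stmt_8 {k : ℕ} (b : Fin (k+1) → ℕ) (hb : Monotone b) (i : ℕ) :
    Dop i (slide b) = if i = b (Fin.last k) then slide (b ∘ Fin.castSucc) else 0 := by
  refine mul_left_cancel₀ (X_ne_zero i) ?_
  rw [X_mul_Dop, truncOp_sub_truncOp_swapVar_slide hb]
  split_ifs with hi
  · subst hi
    simp only [true_and]
    exact sum_compatSet_filter_last hb
  · rw [mul_zero]
    exact sum_eq_zero fun c hc => absurd (mem_filter.mp hc).2.1 (Ne.symm hi)
end
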